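/- Let {AB, CD} be a proper pair of oriented prime segments defining f = f_AB ∧ f_CD on the grid G. Then the segments AB and CD intersect if and only if the true set of f is the singleton {A} (in which case A = C). -/

import Mathlib

/-- Cast an integer point to the real plane. -/
def toR (p : ℤ × ℤ) : ℝ × ℝ := ((p.1 : ℝ), (p.2 : ℝ))

/-- Signed area determinant Δ(P,Q,R). -/
def Det (P Q R : ℤ × ℤ) : ℤ :=
  (Q.1 - P.1) * (R.2 - P.2) - (Q.2 - P.2) * (R.1 - P.1)

/-- Two integer points are adjacent: distinct, and the segment between them
contains no integer point other than the endpoints. -/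
def Adjacent (A B : ℤ × ℤ) : Prop :=
  A ≠ B ∧ ∀ C : ℤ × ℤ, toR C ∈ segment ℝ (toR A) (toR B) → C = A ∨ C = B

/-- The {0,1}-valued (Bool-valued) function defined by the oriented prime
segment AB: on the line through A and B it is true iff the point is strictly
closer to A than to B; off the line it is true iff triangle A B X is
counterclockwise. -/
def fseg (A B X : ℤ × ℤ) : Bool :=
  if Det A B X = 0 then
    decide ((X.1 - A.1) ^ 2 + (X.2 - A.2) ^ 2 < (X.1 - B.1) ^ 2 + (X.2 - B.2) ^ 2)
  else
    decide (0 < Det A B X)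

/-- The grid {0,…,m−1} × {0,…,n−1} as a set of integer points. -/
def Grid (m n : ℕ) : Set (ℤ × ℤ) :=
  {p | 0 ≤ p.1 ∧ p.1 < (m : ℤ) ∧ 0 ≤ p.2 ∧ p.2 < (n : ℤ)}

/-- A pair of oriented prime segments (A,B), (C,D) is proper. -/
def ProperPair (A B C D : ℤ × ℤ) : Prop :=
  Adjacent A B ∧ Adjacent C D ∧
    fseg C D A = true ∧ fseg C D B = true ∧ fseg A B C = true ∧ fseg A B D = true

/-- f is a threshold function on the grid. -/
def IsThreshold (m n : ℕ) (f : ℤ × ℤ → Bool) : Prop :=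
  ∃ a0 a1 a2 : ℝ, ∀ p ∈ Grid m n,
    (f p = true ↔ a1 * (p.1 : ℝ) + a2 * (p.2 : ℝ) ≥ a0)

/-- f is a 2-threshold function on the grid: a conjunction of two threshold
functions. -/
def Is2Threshold (m n : ℕ) (f : ℤ × ℤ → Bool) : Prop :=
  ∃ g h : ℤ × ℤ → Bool, IsThreshold m n g ∧ IsThreshold m n h ∧
    ∀ p ∈ Grid m n, f p = (g p && h p)

/-!
A true value of `f_AB` at `X` puts `X` in the closed left half-plane of `AB`; on the line `AB`
itself, primality makes `B - A` primitive, so `X = A + r (B - A)` with an integer `r ≤ 0`.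

Suppose the segments meet at `P`. If `P` is an endpoint of `CD`, it is a lattice point of the
prime segment `AB`, hence `A` or `B`, and the orientation conditions leave only `C = A`. If `P` is
interior to `CD`, then `C` and `D` lie on the line `AB` behind `A`, so `P = A`, which is a lattice
point of the prime segment `CD` and therefore `C`. Once `A = C`, the conditions
`f_AB(D) = f_AD(B) = 1` force `D = 2A - B`, and then `f_AB ∧ f_AD` holds only at `A`.
Conversely, `f` is true at `C`, so if `A` is its only true point then `C = A`.
-/

theorem toR_add (p q : ℤ × ℤ) : toR (p + q) = toR p + toR q := by
  ext <;> simp [toR]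

theorem toR_sub (p q : ℤ × ℤ) : toR (p - q) = toR p - toR q := by
  ext <;> simp [toR]

theorem toR_zsmul (k : ℤ) (p : ℤ × ℤ) : toR (k • p) = (k : ℝ) • toR p := by
  ext <;> simp [toR]

theorem toR_injective : Function.Injective toR := fun p q h => by
  simpa [toR, Prod.ext_iff] using h

theorem det_eq (A B X : ℤ × ℤ) :
    Det A B X = (B - A).1 * (X - A).2 - (B - A).2 * (X - A).1 := rfl

theorem det_swap (A B X : ℤ × ℤ) : Det A X B = -Det A B X := by
  unfold Det; ring

theorem sq_add_sq_pos_of_ne_zero {p : ℤ × ℤ} (hp : p ≠ 0) : 0 < p.1 ^ 2 + p.2 ^ 2 := by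
  rcases p with ⟨a, b⟩
  have : a ≠ 0 ∨ b ≠ 0 := by
    by_contra! h0
    exact hp (Prod.ext h0.1 h0.2)
  rcases this with h | h <;> positivity

theorem det_nonneg_of_fseg {A B X : ℤ × ℤ} (h : fseg A B X = true) : 0 ≤ Det A B X := by
  unfold fseg at h
  split_ifs at h <;> simp only [decide_eq_true_eq] at h <;> omega

theorem fseg_left {A B : ℤ × ℤ} (h : A ≠ B) : fseg A B A = true := by
  have := sq_add_sq_pos_of_ne_zero (sub_ne_zero.mpr h)
  simp_all [fseg, Det]

theorem fseg_right (A B : ℤ × ℤ) : fseg A B B = false := by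
  have : Det A B B = 0 := by unfold Det; ring
  simp only [fseg, this, if_true, sub_self, decide_eq_false_iff_not, not_lt]
  positivity

-- Bezout: with `a u₁ + b u₂ = 1`, take `r = a x₁ + b x₂`.
theorem exists_eq_smul_of_cross_eq_zero {u x : ℤ × ℤ} (hu : IsCoprime u.1 u.2)
    (h : u.1 * x.2 - u.2 * x.1 = 0) : ∃ r : ℤ, x = r • u := by
  obtain ⟨a, b, hab⟩ := hu
  refine ⟨a * x.1 + b * x.2, Prod.ext ?_ ?_⟩
  · simp only [Prod.smul_fst, smul_eq_mul]
    linear_combination (-x.1) * hab - b * h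
  · simp only [Prod.smul_snd, smul_eq_mul]
    linear_combination (-x.2) * hab + a * h

section

variable {A B C D X : ℤ × ℤ}

namespace Adjacent

theorem eq_one_of_sub_eq_smul (h : Adjacent A B) {k : ℤ} {w : ℤ × ℤ} (hk : 0 < k)
    (hw : B - A = k • w) : k = 1 := by
  have hw0 : w ≠ 0 := by
    rintro rfl
    exact h.1 (sub_eq_zero.mp (by simpa using hw)).symm
  have hmem : toR (A + w) ∈ segment ℝ (toR A) (toR B) := by
    rw [segment_eq_image']
    refine ⟨1 / k, ⟨by positivity, div_le_one_of_le₀ (by exact_mod_cast hk) (by positivity)⟩, ?_⟩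
    have hk' : (k : ℝ) ≠ 0 := by exact_mod_cast hk.ne'
    show toR A + (1 / (k : ℝ)) • (toR B - toR A) = toR (A + w)
    rw [← toR_sub, hw, toR_zsmul, smul_smul, one_div_mul_cancel hk', one_smul, toR_add]
  rcases h.2 _ hmem with h1 | h1
  · exact absurd (by simpa using h1) hw0
  · have : (k - 1) • w = 0 := by
      rw [sub_smul, ← hw, ← h1, one_smul, add_sub_cancel_left, sub_self]
    have := (smul_eq_zero.mp this).resolve_right hw0
    omega

theorem isCoprime (h : Adjacent A B) : IsCoprime (B - A).1 (B - A).2 := by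
  set g := Int.gcd (B - A).1 (B - A).2
  obtain ⟨v₁, hv₁⟩ := Int.gcd_dvd_left (B - A).1 (B - A).2
  obtain ⟨v₂, hv₂⟩ := Int.gcd_dvd_right (B - A).1 (B - A).2
  have hg : 0 < g := Int.gcd_pos_iff.mpr (by
    by_contra! h0
    exact h.1 (sub_eq_zero.mp (Prod.ext h0.1 h0.2)).symm)
  have := h.eq_one_of_sub_eq_smul (k := g) (w := (v₁, v₂)) (by exact_mod_cast hg)
    (Prod.ext hv₁ hv₂)
  exact Int.isCoprime_iff_gcd_eq_one.mpr (by exact_mod_cast this)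

theorem exists_nonpos_of_fseg (h : Adjacent A B) (hdet : Det A B X = 0)
    (hf : fseg A B X = true) : ∃ r : ℤ, r ≤ 0 ∧ X - A = r • (B - A) := by
  obtain ⟨r, hr⟩ := exists_eq_smul_of_cross_eq_zero h.isCoprime ((det_eq A B X).symm.trans hdet)
  refine ⟨r, ?_, hr⟩
  have hN := sq_add_sq_pos_of_ne_zero (sub_ne_zero.mpr h.1.symm)
  have h₁ : X.1 - A.1 = r * (B - A).1 := congrArg Prod.fst hr
  have h₂ : X.2 - A.2 = r * (B - A).2 := congrArg Prod.snd hr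
  have h₁' : X.1 - B.1 = (r - 1) * (B - A).1 := by simp only [Prod.fst_sub] at *; linarith
  have h₂' : X.2 - B.2 = (r - 1) * (B - A).2 := by simp only [Prod.snd_sub] at *; linarith
  simp only [fseg, hdet, if_true, decide_eq_true_eq, h₁, h₂, h₁', h₂'] at hf
  nlinarith

theorem eq_left_of_mem_segment (h : Adjacent A B) (hX : toR X ∈ segment ℝ (toR A) (toR B))
    (hf : fseg A B X = true) : X = A :=
  (h.2 X hX).resolve_right (by rintro rfl; simp [fseg_right] at hf)

end Adjacent

theorem toR_eq_add_smul {r : ℤ} (h : X - A = r • (B - A)) :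
    toR X = toR A + (r : ℝ) • (toR B - toR A) := by
  rw [← toR_sub, ← toR_zsmul, ← h, toR_sub, add_sub_cancel]

theorem eq_left_of_mem_segment_of_mem_openSegment (hAB : Adjacent A B) (hC : fseg A B C = true)
    (hD : fseg A B D = true) {P : ℝ × ℝ} (hPAB : P ∈ segment ℝ (toR A) (toR B))
    (hPCD : P ∈ openSegment ℝ (toR C) (toR D)) : P = toR A := by
  rw [segment_eq_image'] at hPAB
  obtain ⟨α, ⟨hα, -⟩, rfl⟩ := hPAB
  rw [openSegment_eq_image'] at hPCD
  obtain ⟨β, ⟨hβ0, hβ1⟩, hP⟩ := hPCD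
  have hdet : (1 - β) * (Det A B C : ℝ) + β * Det A B D = 0 := by
    have e₁ := congrArg Prod.fst hP
    have e₂ := congrArg Prod.snd hP
    simp only [toR, Prod.fst_add, Prod.snd_add, Prod.fst_sub, Prod.snd_sub, Prod.smul_fst,
      Prod.smul_snd, smul_eq_mul] at e₁ e₂
    push_cast [Det]
    linear_combination ((B.1 : ℝ) - A.1) * e₂ - ((B.2 : ℝ) - A.2) * e₁
  have hCnn : (0 : ℝ) ≤ Det A B C := by exact_mod_cast det_nonneg_of_fseg hC
  have hDnn : (0 : ℝ) ≤ Det A B D := by exact_mod_cast det_nonneg_of_fseg hD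
  obtain ⟨hC0, hD0⟩ := (add_eq_zero_iff_of_nonneg (mul_nonneg (by linarith) hCnn)
    (mul_nonneg hβ0.le hDnn)).mp hdet
  replace hC0 : Det A B C = 0 := by
    exact_mod_cast (mul_eq_zero.mp hC0).resolve_left (by linarith)
  replace hD0 : Det A B D = 0 := by exact_mod_cast (mul_eq_zero.mp hD0).resolve_left hβ0.ne'
  obtain ⟨s, hs, hsC⟩ := hAB.exists_nonpos_of_fseg hC0 hC
  obtain ⟨t, ht, htD⟩ := hAB.exists_nonpos_of_fseg hD0 hD
  rw [toR_eq_add_smul hsC, toR_eq_add_smul htD] at hP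
  have hu : toR B - toR A ≠ 0 := sub_ne_zero.mpr (toR_injective.ne hAB.1.symm)
  have hα' : α = (1 - β) * s + β * t :=
    smul_left_injective ℝ hu (by linear_combination (norm := module) -hP)
  have hs' : (s : ℝ) ≤ 0 := by exact_mod_cast hs
  have ht' : (t : ℝ) ≤ 0 := by exact_mod_cast ht
  have hα0 : α = 0 := by nlinarith
  simp [hα0]

theorem eq_of_segment_inter_nonempty (hAB : Adjacent A B) (hCD : Adjacent C D)
    (hA : fseg C D A = true) (hC : fseg A B C = true) (hD : fseg A B D = true)
    (h : (segment ℝ (toR A) (toR B) ∩ segment ℝ (toR C) (toR D)).Nonempty) : A = C := by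
  obtain ⟨P, hPAB, hPCD⟩ := h
  suffices hP : P = toR A from hCD.eq_left_of_mem_segment (hP ▸ hPCD) hA
  rw [← insert_endpoints_openSegment] at hPCD
  rcases hPCD with rfl | rfl | hPCD
  · rw [hAB.eq_left_of_mem_segment hPAB hC]
  · obtain rfl := hAB.eq_left_of_mem_segment hPAB hD
    simp [fseg_right] at hA
  · exact eq_left_of_mem_segment_of_mem_openSegment hAB hC hD hPAB hPCD

theorem Adjacent.sub_eq_neg_of_fseg (hAB : Adjacent A B) (hAD : Adjacent A D)
    (hB : fseg A D B = true) (hD : fseg A B D = true) : D - A = -(B - A) := by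
  have hdet : Det A B D = 0 := by
    have := det_nonneg_of_fseg hB
    have := det_nonneg_of_fseg hD
    have := det_swap A B D
    omega
  obtain ⟨r, hr, hrD⟩ := hAB.exists_nonpos_of_fseg hdet hD
  have hr0 : r ≠ 0 := by
    rintro rfl
    exact hAD.1 (sub_eq_zero.mp (by simpa using hrD)).symm
  have hr1 := hAD.eq_one_of_sub_eq_smul (k := -r) (w := -(B - A)) (by omega)
    (by rw [hrD, neg_smul_neg])
  rw [hrD, show r = -1 by omega, neg_one_smul]

theorem fseg_and_fseg_iff (hAB : Adjacent A B) (hAD : Adjacent A D)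
    (hB : fseg A D B = true) (hD : fseg A B D = true) (X : ℤ × ℤ) :
    (fseg A B X && fseg A D X) = true ↔ X = A := by
  have hDA := hAB.sub_eq_neg_of_fseg hAD hB hD
  refine ⟨fun hX => ?_, by rintro rfl; simp [fseg_left hAB.1, fseg_left hAD.1]⟩
  obtain ⟨hXB, hXD⟩ := Bool.and_eq_true_iff.mp hX
  have hdet : Det A D X = -Det A B X := by
    rw [det_eq, det_eq, hDA, Prod.fst_neg, Prod.snd_neg]
    ring
  have hB0 : Det A B X = 0 := by
    have := det_nonneg_of_fseg hXB
    have := det_nonneg_of_fseg hXD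
    omega
  obtain ⟨r, hr, hrX⟩ := hAB.exists_nonpos_of_fseg hB0 hXB
  obtain ⟨s, hs, hsX⟩ := hAD.exists_nonpos_of_fseg (by omega) hXD
  rw [hDA, smul_neg, ← neg_smul, hrX] at hsX
  have hrs : r = -s := smul_left_injective ℤ (sub_ne_zero.mpr hAB.1.symm) hsX
  rw [show r = 0 by omega, zero_smul, sub_eq_zero] at hrX
  exact hrX

end

theorem stmt15_general (m n : ℕ) (A B C D : ℤ × ℤ)
    (hC : C ∈ Grid m n)
    (hprop : ProperPair A B C D) :
    ((segment ℝ (toR A) (toR B) ∩ segment ℝ (toR C) (toR D)).Nonempty ↔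
      ∀ X ∈ Grid m n, ((fseg A B X && fseg C D X) = true ↔ X = A)) ∧
    ((segment ℝ (toR A) (toR B) ∩ segment ℝ (toR C) (toR D)).Nonempty → A = C) := by
  obtain ⟨hAB, hCD, hfA, hfB, hfC, hfD⟩ := hprop
  have hAC := eq_of_segment_inter_nonempty hAB hCD hfA hfC hfD
  refine ⟨⟨fun h => ?_, fun h => ?_⟩, hAC⟩
  · obtain rfl := hAC h
    exact fun X _ => fseg_and_fseg_iff hAB hCD hfB hfD X
  · have hCA : C = A := (h C hC).mp (by simp [hfC, fseg_left hCD.1])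
    exact ⟨toR A, left_mem_segment ℝ _ _, hCA ▸ left_mem_segment ℝ _ _⟩

/-- for a proper pair {AB, CD} defining f = f_AB ∧ f_CD on the
grid, the segments AB and CD intersect iff the true point set of f is the
singleton {A}; in which case A = C. -/
theorem stmt15 (m n : ℕ) (A B C D : ℤ × ℤ)
    (hA : A ∈ Grid m n) (hB : B ∈ Grid m n)
    (hC : C ∈ Grid m n) (hD : D ∈ Grid m n)
    (hprop : ProperPair A B C D) :
    ((segment ℝ (toR A) (toR B) ∩ segment ℝ (toR C) (toR D)).Nonempty ↔
      ∀ X ∈ Grid m n, ((fseg A B X && fseg C D X) = true ↔ X = A)) ∧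
    ((segment ℝ (toR A) (toR B) ∩ segment ℝ (toR C) (toR D)).Nonempty → A = C) :=
  stmt15_general m n A B C D hC hprop
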